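/- arXiv:1505.00584 — 4 statements merged into one kernel-verified Lean document; each statement's English description precedes it below -/
import Mathlib

section
/- In the directed power graph of a finite group, if there is an edge from some vertex of a strong component c1 to some vertex of a strong component c2, then there is an edge from every vertex of c1 to every vertex of c2. -/
/-- In the directed power graph of a finite group (edge `(g,h)` iff `h = g ^ k`),
if there is an edge from some vertex of a strong component (cluster) to some vertex of
another strong component, then there is an edge from every vertex of the first
component to every vertex of the second.  Being in the same strong component is
expressed as mutual reachability, which here amounts to having directed edges both
ways (the edge relation is reflexive and transitive). -/
theorem power_graph_cluster_edges {G : Type*} [Group G] [Fintype G]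
    (v₁ v₁' v₂ v₂' : G)
    (h₁ : (∃ k : ℕ, v₁ ^ k = v₁') ∧ (∃ k : ℕ, v₁' ^ k = v₁))
    (h₂ : (∃ k : ℕ, v₂ ^ k = v₂') ∧ (∃ k : ℕ, v₂' ^ k = v₂))
    (hedge : ∃ k : ℕ, v₁ ^ k = v₂) :
    ∃ k : ℕ, v₁' ^ k = v₂' := by
  obtain ⟨a, ha⟩ := h₁.2
  obtain ⟨b, hb⟩ := h₂.1
  obtain ⟨k, hk⟩ := hedge
  exact ⟨a * k * b, by rw [pow_mul, pow_mul, ha, hk, hb]⟩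
end

section
/- If G1 and G2 are finite graphs each containing a Hamiltonian cycle, then the strong product G1 × G2 (where ((v1,w1),(v2,w2)) is an edge iff (v1=v2 and (w1,w2) ∈ E2) or ((v1,v2) ∈ E1 and w1=w2) or ((v1,v2) ∈ E1 and (w1,w2) ∈ E2)) contains a Hamiltonian cycle. -/
open SimpleGraph

/-- The strong product of two simple graphs. -/
def strongProd {V W : Type*} (G : SimpleGraph V) (H : SimpleGraph W) :
    SimpleGraph (V × W) where
  Adj a b := (a.1 = b.1 ∧ H.Adj a.2 b.2) ∨ (G.Adj a.1 b.1 ∧ a.2 = b.2) ∨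
    (G.Adj a.1 b.1 ∧ H.Adj a.2 b.2)
  symm := by
    constructor
    rintro ⟨a₁, a₂⟩ ⟨b₁, b₂⟩ (⟨h₁, h₂⟩ | ⟨h₁, h₂⟩ | ⟨h₁, h₂⟩)
    · exact Or.inl ⟨h₁.symm, h₂.symm⟩
    · exact Or.inr (Or.inl ⟨h₁.symm, h₂.symm⟩)
    · exact Or.inr (Or.inr ⟨h₁.symm, h₂.symm⟩)
  loopless := by
    constructor
    rintro ⟨a₁, a₂⟩ (⟨_, h⟩ | ⟨h, _⟩ | ⟨h, _⟩)
    · exact H.ne_of_adj h rfl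
    · exact G.ne_of_adj h rfl
    · exact G.ne_of_adj h rfl

/-!
Walk around the Hamiltonian cycle of `H` once for each vertex of `G`, taking the vertices of `G`
in their cyclic order. Inside a round only the second coordinate moves, along an edge of `H`.
Between rounds, and when closing up, the second coordinate goes from the last to the first
vertex of the cycle of `H` while the first coordinate moves along an edge of the cycle of `G`:
this diagonal step is an edge of the strong product.
-/

namespace List

variable {α β : Type*} {l₁ : List α} {l₂ : List β} {p : α × β}

theorem mem_head?_product : p ∈ (l₁ ×ˢ l₂).head? ↔ p.1 ∈ l₁.head? ∧ p.2 ∈ l₂.head? := by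
  cases l₁ <;> cases l₂ <;> simp [product_cons, Prod.ext_iff, eq_comm]

theorem mem_getLast?_product :
    p ∈ (l₁ ×ˢ l₂).getLast? ↔ p.1 ∈ l₁.getLast? ∧ p.2 ∈ l₂.getLast? := by
  rcases l₂ with _ | ⟨b, l₂⟩
  · simp
  induction l₁ with
  | nil => simp
  | cons a t ih =>
    rcases t with _ | ⟨c, t⟩
    · rw [product_cons, nil_product, append_nil, getLast?_map]
      simp [Prod.ext_iff, eq_comm, and_comm]
    · rw [product_cons, getLast?_append_of_ne_nil _ (by simp), ih, getLast?_cons_cons]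

end List

namespace SimpleGraph

variable {α β : Type*} {G : SimpleGraph α} {H : SimpleGraph β}

/-- A Hamiltonian cycle recorded as its cyclic sequence of vertices, each listed once: this is the
support of the cycle with the base point dropped at the start. -/
structure IsHamiltonianCycleList (G : SimpleGraph α) (l : List α) : Prop where
  nodup : l.Nodup
  mem : ∀ a, a ∈ l
  isChain : l.IsChain G.Adj
  adj_getLast_head : ∀ a ∈ l.getLast?, ∀ b ∈ l.head?, G.Adj a b
  three_le_length : 3 ≤ l.length

lemma Walk.IsHamiltonianCycle.isHamiltonianCycleList_support_tail [DecidableEq α] {v : α}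
    {c : G.Walk v v} (hc : c.IsHamiltonianCycle) : G.IsHamiltonianCycleList c.support.tail := by
  have htail : c.tail.support = c.support.tail := c.support_tail_of_not_nil hc.not_nil
  have hlength : c.support.tail.length = c.length := by simp
  refine ⟨htail ▸ hc.isHamiltonian_tail.isPath.support_nodup,
    fun a ↦ htail ▸ hc.isHamiltonian_tail.mem_support a, c.isChain_adj_support.tail, ?_,
    hlength ▸ hc.three_le_length⟩
  intro a ha b hb
  have hlast : c.support.tail.getLast? = some v := by
    rw [List.getLast?_tail, if_neg (by rw [c.length_support]; have := hc.three_le_length; omega),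
      List.getLast?_eq_some_getLast c.support_ne_nil, c.getLast_support]
  rw [hlast, Option.mem_some_iff] at ha
  subst ha
  have hchain := c.isChain_adj_support
  rw [← c.cons_tail_support, List.isChain_cons] at hchain
  exact hchain.1 b hb

lemma IsHamiltonianCycleList.exists_isHamiltonianCycle [DecidableEq α] {l : List α}
    (h : G.IsHamiltonianCycleList l) : ∃ (a : α) (c : G.Walk a a), c.IsHamiltonianCycle := by
  obtain ⟨a, t, rfl⟩ : ∃ a t, l = a :: t :=
    List.exists_cons_of_ne_nil (by rintro rfl; simpa using h.three_le_length)
  have hchain : (a :: t ++ [a]).IsChain G.Adj :=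
    h.isChain.append (List.isChain_singleton a) fun x hx y hy ↦
      h.adj_getLast_head x hx y (by simpa using hy)
  obtain ⟨c, hc⟩ : ∃ c : G.Walk a a, c.support = a :: (t ++ [a]) :=
    ⟨(Walk.ofSupport _ (List.cons_ne_nil a (t ++ [a])) hchain).copy (List.head_cons ..) (by simp),
      by rw [Walk.support_copy, Walk.support_ofSupport]⟩
  have hsupport : c.support.tail = t ++ [a] := by rw [hc, List.tail_cons]
  have hlength : c.length = t.length + 1 := by
    have := c.length_support
    rw [hc] at this
    simpa using this.symm
  have hperm : (t ++ [a]).Perm (a :: t) := List.perm_append_singleton a t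
  refine ⟨a, c, Walk.isHamiltonianCycle_iff_isCycle_and_support_count_tail_eq_one.mpr ⟨?_, ?_⟩⟩
  · have hnil : ¬c.Nil := by
      rw [← Walk.length_eq_zero_iff, hlength]; omega
    rw [Walk.isCycle_iff_isPath_tail_and_le_length, Walk.isPath_def,
      c.support_tail_of_not_nil hnil, hsupport, hlength]
    exact ⟨hperm.nodup_iff.mpr h.nodup, by simpa using h.three_le_length⟩
  · intro x
    rw [hsupport, hperm.count_eq]
    exact List.count_eq_one_of_mem h.nodup (h.mem x)

lemma isChain_product_strongProd {l₁ : List α} {l₂ : List β}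
    (h₁ : l₁.IsChain G.Adj) (h₂ : l₂.IsChain H.Adj)
    (hwrap : ∀ a ∈ l₂.getLast?, ∀ b ∈ l₂.head?, H.Adj a b) :
    (l₁ ×ˢ l₂).IsChain (strongProd G H).Adj := by
  induction l₁ with
  | nil => simp
  | cons a t ih =>
    rw [List.isChain_cons] at h₁
    rw [List.product_cons]
    refine .append (List.isChain_map_of_isChain (S := (strongProd G H).Adj) (a, ·)
      (fun _ _ hb ↦ Or.inl ⟨rfl, hb⟩) h₂) (ih h₁.2) ?_
    rintro x hx y hy
    rw [List.getLast?_map] at hx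
    obtain ⟨b, hb, rfl⟩ := Option.mem_map.mp hx
    rw [List.mem_head?_product] at hy
    exact Or.inr (Or.inr ⟨h₁.1 _ hy.1, hwrap _ hb _ hy.2⟩)

lemma IsHamiltonianCycleList.strongProd {l₁ : List α} {l₂ : List β}
    (h₁ : G.IsHamiltonianCycleList l₁) (h₂ : H.IsHamiltonianCycleList l₂) :
    (strongProd G H).IsHamiltonianCycleList (l₁ ×ˢ l₂) where
  nodup := h₁.nodup.product h₂.nodup
  mem p := List.mem_product.mpr ⟨h₁.mem p.1, h₂.mem p.2⟩
  isChain := isChain_product_strongProd h₁.isChain h₂.isChain h₂.adj_getLast_head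
  adj_getLast_head p hp q hq := by
    rw [List.mem_getLast?_product] at hp
    rw [List.mem_head?_product] at hq
    exact Or.inr (Or.inr ⟨h₁.adj_getLast_head _ hp.1 _ hq.1, h₂.adj_getLast_head _ hp.2 _ hq.2⟩)
  three_le_length := by
    rw [List.length_product]
    nlinarith [h₁.three_le_length, h₂.three_le_length]

end SimpleGraph

theorem strongProd_hamiltonian_general {V W : Type*} [DecidableEq V] [DecidableEq W]
    (G : SimpleGraph V) (H : SimpleGraph W)
    (hG : ∃ (v : V) (c : G.Walk v v), c.IsHamiltonianCycle)
    (hH : ∃ (w : W) (c : H.Walk w w), c.IsHamiltonianCycle) :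
    ∃ (x : V × W) (c : (strongProd G H).Walk x x), c.IsHamiltonianCycle := by
  obtain ⟨v, c, hc⟩ := hG
  obtain ⟨w, d, hd⟩ := hH
  exact (hc.isHamiltonianCycleList_support_tail.strongProd
    hd.isHamiltonianCycleList_support_tail).exists_isHamiltonianCycle

/-- If two finite graphs each contain a Hamiltonian cycle, then their strong product
contains a Hamiltonian cycle. -/
theorem strongProd_hamiltonian {V W : Type*} [Fintype V] [Fintype W] [DecidableEq V] [DecidableEq W]
    (G : SimpleGraph V) (H : SimpleGraph W)
    (hG : ∃ (v : V) (c : G.Walk v v), c.IsHamiltonianCycle)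
    (hH : ∃ (w : W) (c : H.Walk w w), c.IsHamiltonianCycle) :
    ∃ (x : V × W) (c : (strongProd G H).Walk x x), c.IsHamiltonianCycle :=
  strongProd_hamiltonian_general G H hG hH
end

section
/- A finite weighted tree T=(V,E,w) with w : V → ℕ admits a w-Hamiltonian cycle if and only if w(v) ≥ deg(v) for all v ∈ V. -/
open SimpleGraph

/-- A `w`-Hamiltonian cycle: a closed walk visiting every vertex, with each vertex
`x` visited at most `w x` times (the start vertex counted once). -/
def IsWHamiltonianCycle {V : Type*} [DecidableEq V] (G : SimpleGraph V) (w : V → ℕ)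
    {u : V} (π : G.Walk u u) : Prop :=
  (∀ x : V, x ∈ π.support) ∧ ∀ x : V, π.support.tail.count x ≤ w x

/-!
Count visits by darts: the visits of a walk to `v` after its start are the darts of the walk
ending at `v`, while `deg v` is the number of darts of the graph ending at `v`. In a tree the
edge `xv` is the only path from `x` to `v`, so a closed walk through every vertex traverses every
dart and hence visits `v` at least `deg v` times. Conversely, splicing the detour `p → ℓ → p`
at a leaf `ℓ` into such a walk for the tree without `ℓ` gives, by induction, a closed walk
traversing every dart exactly once, which visits each `v` exactly `deg v` times.
-/

namespace SimpleGraph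

open Finset

variable {V : Type*} {G : SimpleGraph V}

theorem card_dart_snd_fiber_eq_degree [Fintype V] [DecidableEq V] [DecidableRel G.Adj] (v : V) :
    #{d : G.Dart | d.snd = v} = G.degree v := by
  rw [← dart_fst_fiber_card_eq_degree]
  exact Finset.card_equiv (Function.Involutive.toPerm _ Dart.symm_involutive) (by simp)

namespace Walk

theorem count_support_tail_eq_countP_darts [DecidableEq V] {u w : V} (p : G.Walk u w) (v : V) :
    p.support.tail.count v = p.darts.countP (·.snd = v) := by
  rw [← p.map_snd_darts, List.count, List.countP_map]
  rfl

variable [Fintype V] [DecidableEq V] [DecidableRel G.Adj]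

theorem degree_le_count_support_tail {u w : V} (p : G.Walk u w) (hp : ∀ d : G.Dart, d ∈ p.darts)
    (v : V) : G.degree v ≤ p.support.tail.count v := by
  rw [← card_dart_snd_fiber_eq_degree, count_support_tail_eq_countP_darts,
    List.countP_eq_length_filter]
  calc #{d : G.Dart | d.snd = v} ≤ (p.darts.filter (·.snd = v)).toFinset.card :=
        card_le_card fun d => by simp [hp]
    _ ≤ _ := List.toFinset_card_le _

theorem count_support_tail_eq_degree {u w : V} (p : G.Walk u w) (hp : ∀ d : G.Dart, d ∈ p.darts)
    (hnd : p.darts.Nodup) (v : V) : p.support.tail.count v = G.degree v := by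
  rw [← card_dart_snd_fiber_eq_degree, count_support_tail_eq_countP_darts,
    List.countP_eq_length_filter, ← List.toFinset_card_of_nodup (hnd.filter _)]
  congr 1
  ext d
  simp [hp]

end Walk

theorem IsAcyclic.dart_mem_darts (hG : G.IsAcyclic) (d : G.Dart) (p : G.Walk d.fst d.snd) :
    d ∈ p.darts := by
  classical
  have hbypass : p.bypass = Walk.cons d.adj Walk.nil :=
    congrArg Subtype.val <|
      (hG.subsingleton_path _ _).elim ⟨_, p.bypass_isPath⟩ (Path.singleton d.adj)
  apply p.darts_bypass_subset_darts
  simp [hbypass]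

theorem IsAcyclic.dart_mem_darts_of_mem_support (hG : G.IsAcyclic) {u : V} (c : G.Walk u u)
    {d : G.Dart} (hfst : d.fst ∈ c.support) (hsnd : d.snd ∈ c.support) : d ∈ c.darts := by
  classical
  have hsnd' : d.snd ∈ (c.rotate d.fst hfst).support := (c.mem_support_rotate_iff _ _).mpr hsnd
  exact (c.rotate_darts _ hfst).perm.subset
    (Walk.darts_takeUntil_subset_darts _ hsnd' (hG.dart_mem_darts d _))

theorem Preconnected.mem_support_of_forall_mem_darts (hG : G.Preconnected) {u w : V}
    (c : G.Walk u w) (hc : ∀ d : G.Dart, d ∈ c.darts) (x : V) : x ∈ c.support := by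
  obtain ⟨q⟩ := hG x u
  cases q with
  | nil => exact c.start_mem_support
  | cons h _ => exact c.dart_fst_mem_support_of_mem_darts (hc ⟨(x, _), h⟩)

theorem exists_walk_darts_nodup_forall_mem_of_induce_compl_singleton {ℓ p : V} (hℓp : G.Adj ℓ p)
    (hℓ : ∀ y, G.Adj ℓ y → y = p) (hconn : (G.induce {ℓ}ᶜ).Preconnected)
    {u : ({ℓ}ᶜ : Set V)} (c : (G.induce {ℓ}ᶜ).Walk u u) (hnd : c.darts.Nodup)
    (hc : ∀ d, d ∈ c.darts) :
    ∃ c' : G.Walk p p, c'.darts.Nodup ∧ ∀ d : G.Dart, d ∈ c'.darts := by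
  classical
  set f := (Embedding.induce ({ℓ}ᶜ : Set V) (G := G)).toHom
  set c₀ := c.map f
  have hf : Function.Injective f.mapDart := fun d₁ d₂ h => by
    simpa [Dart.ext_iff, Hom.mapDart_apply, f, Prod.ext_iff, Subtype.ext_iff] using h
  have hc₀ : ∀ d : G.Dart, d ∈ c₀.darts ↔ d.fst ≠ ℓ ∧ d.snd ≠ ℓ := by
    intro d
    simp only [c₀, Walk.darts_map, List.mem_map]
    constructor
    · rintro ⟨d', -, rfl⟩
      exact ⟨d'.fst.2, d'.snd.2⟩
    · rintro ⟨h₁, h₂⟩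
      exact ⟨⟨(⟨d.fst, h₁⟩, ⟨d.snd, h₂⟩), d.adj⟩, hc _, rfl⟩
  have hp : p ∈ c₀.support := by
    rw [Walk.support_map]
    exact List.mem_map_of_mem (hconn.mem_support_of_forall_mem_darts c hc ⟨p, hℓp.ne'⟩)
  have hρ := (c₀.rotate_darts p hp).perm
  refine ⟨Walk.cons hℓp.symm (Walk.cons hℓp (c₀.rotate p hp)), ?_, fun d => ?_⟩
  · simp only [Walk.darts_cons, List.nodup_cons, List.mem_cons, hρ.mem_iff, hρ.nodup_iff, hc₀]
    refine ⟨by simp [Dart.ext_iff, hℓp.ne], by simp, ?_⟩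
    simpa only [c₀, Walk.darts_map] using hnd.map hf
  · simp only [Walk.darts_cons, List.mem_cons, hρ.mem_iff, hc₀]
    by_cases h₁ : d.fst = ℓ
    · have h₂ : d.snd = p := hℓ _ (h₁ ▸ d.adj)
      exact Or.inr (Or.inl ((Dart.ext_iff _ _).mpr (Prod.ext h₁ h₂)))
    by_cases h₂ : d.snd = ℓ
    · have h₁ : d.fst = p := hℓ _ (h₂ ▸ d.adj.symm)
      exact Or.inl ((Dart.ext_iff _ _).mpr (Prod.ext h₁ h₂))
    exact Or.inr (Or.inr ⟨h₁, h₂⟩)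

theorem IsTree.exists_walk_darts_nodup_forall_mem [Finite V] (hG : G.IsTree) :
    ∃ (u : V) (c : G.Walk u u), c.darts.Nodup ∧ ∀ d : G.Dart, d ∈ c.darts := by
  induction h : Nat.card V using Nat.strong_induction_on generalizing V with
  | _ n ih =>
  classical
  have : Fintype V := Fintype.ofFinite V
  rcases subsingleton_or_nontrivial V with _ | _
  · obtain ⟨u⟩ := hG.connected.nonempty
    exact ⟨u, .nil, List.nodup_nil, fun d => (d.adj.ne (Subsingleton.elim _ _)).elim⟩
  obtain ⟨ℓ, hdeg⟩ := hG.exists_vert_degree_one_of_nontrivial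
  obtain ⟨p, hℓp, hℓ⟩ := degree_eq_one_iff_existsUnique_adj.mp hdeg
  have hconn := hG.connected.induce_compl_singleton_of_degree_eq_one hdeg
  have hcard : Nat.card ({ℓ}ᶜ : Set V) < n := by
    rw [← h, Nat.card_coe_set_eq, Set.ncard_compl, Set.ncard_singleton]
    have := Nat.card_pos (α := V)
    omega
  obtain ⟨u, c, hnd, hc⟩ := ih _ hcard ⟨hconn, hG.isAcyclic.induce _⟩ rfl
  exact ⟨p, exists_walk_darts_nodup_forall_mem_of_induce_compl_singleton hℓp hℓ
    hconn.preconnected c hnd hc⟩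

end SimpleGraph

/-- A finite weighted tree admits a `w`-Hamiltonian cycle iff every vertex `v`
satisfies `deg v ≤ w v`. -/
theorem weighted_tree_hamiltonian_iff {V : Type*} [Fintype V] [DecidableEq V]
    (T : SimpleGraph V) [DecidableRel T.Adj] (hT : T.IsTree) (w : V → ℕ) :
    (∃ (u : V) (π : T.Walk u u), IsWHamiltonianCycle T w π) ↔
      ∀ v : V, T.degree v ≤ w v := by
  constructor
  · rintro ⟨u, π, hcov, hcount⟩ v
    have hdarts : ∀ d : T.Dart, d ∈ π.darts := fun d =>
      hT.isAcyclic.dart_mem_darts_of_mem_support π (hcov _) (hcov _)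
    exact (π.degree_le_count_support_tail hdarts v).trans (hcount v)
  · intro hw
    obtain ⟨u, π, hnd, hdarts⟩ := hT.exists_walk_darts_nodup_forall_mem
    refine ⟨u, π, hT.connected.preconnected.mem_support_of_forall_mem_darts π hdarts, fun v => ?_⟩
    exact (π.count_support_tail_eq_degree hdarts hnd v).le.trans (hw v)
end

section
/- A subset A ⊆ [m] × [n] is colorable with column weights u1,...,um and row weights v1,...,vn if and only if for every subset B ⊆ A, Σ_{i ∈ π1(B)} u_i + Σ_{j ∈ π2(B)} v_j ≥ |B|, where π1, π2 are the coordinate projections. -/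
/-!
Hall's theorem. Give column `i` exactly `u i` red slots and row `j` exactly `v j` blue slots,
and let the point `(i, j)` use any red slot of column `i` or blue slot of row `j`. A coloring
of `A` is the same thing as an injective assignment of slots to the points of `A`, and the
points of `B` can reach exactly `Σ_{i ∈ π₁(B)} u i + Σ_{j ∈ π₂(B)} v j` slots, so the stated
inequality is Hall's condition.
-/

open Finset

namespace ColorGame

variable {α β : Type*}

/-- `inl ⟨i, k⟩` with `k < u i` is a red slot of column `i`, `inr ⟨j, k⟩` with `k < v j` a blue
slot of row `j`. -/
def slots (u : α → ℕ) (v : β → ℕ) (s : Finset α) (t : Finset β) :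
    Finset ((Σ _ : α, ℕ) ⊕ (Σ _ : β, ℕ)) :=
  (s.sigma fun i => range (u i)).disjSum (t.sigma fun j => range (v j))

variable {u : α → ℕ} {v : β → ℕ}

theorem card_slots (s : Finset α) (t : Finset β) :
    #(slots u v s t) = ∑ i ∈ s, u i + ∑ j ∈ t, v j := by
  simp [slots, card_disjSum, card_sigma]

theorem mem_slots_left_of_isLeft {i : α} {j : β} {x : (Σ _ : α, ℕ) ⊕ (Σ _ : β, ℕ)}
    (hx : x ∈ slots u v {i} {j}) (hl : x.isLeft) : x ∈ slots u v {i} ∅ := by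
  rcases x with ⟨i', k⟩ | ⟨j', k⟩
  · simp only [slots, inl_mem_disjSum, mem_sigma, mem_singleton, mem_range] at hx ⊢
    exact ⟨hx.1, hx.1 ▸ hx.2⟩
  · simp at hl

theorem mem_slots_right_of_not_isLeft {i : α} {j : β} {x : (Σ _ : α, ℕ) ⊕ (Σ _ : β, ℕ)}
    (hx : x ∈ slots u v {i} {j}) (hr : ¬ x.isLeft) : x ∈ slots u v ∅ {j} := by
  rcases x with ⟨i', k⟩ | ⟨j', k⟩
  · simp at hr
  · simp only [slots, inr_mem_disjSum, mem_sigma, mem_singleton, mem_range] at hx ⊢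
    exact ⟨hx.1, hx.1 ▸ hx.2⟩

variable [DecidableEq α] [DecidableEq β]

def Colorable (u : α → ℕ) (v : β → ℕ) (A : Finset (α × β)) : Prop :=
  ∃ R B : Finset (α × β), R ∪ B = A ∧ Disjoint R B ∧
    (∀ i, #{p ∈ R | p.1 = i} ≤ u i) ∧ (∀ j, #{p ∈ B | p.2 = j} ≤ v j)

theorem biUnion_slots (S : Finset (α × β)) :
    S.biUnion (fun p => slots u v {p.1} {p.2}) =
      slots u v (S.image Prod.fst) (S.image Prod.snd) := by
  ext (⟨i, k⟩ | ⟨j, k⟩) <;> simp [slots, and_comm]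

theorem Colorable.card_le {A : Finset (α × β)} (hA : Colorable u v A) :
    ∀ S ⊆ A, #S ≤ ∑ i ∈ S.image Prod.fst, u i + ∑ j ∈ S.image Prod.snd, v j := by
  obtain ⟨R, B, hRB, -, hR, hB⟩ := hA
  intro S hS
  have hred : #(S ∩ R) ≤ ∑ i ∈ S.image Prod.fst, u i := by
    rw [card_eq_sum_card_fiberwise fun p hp => mem_image_of_mem Prod.fst (mem_inter.1 hp).1]
    exact sum_le_sum fun i _ =>
      (card_le_card (filter_subset_filter _ inter_subset_right)).trans (hR i)
  have hblue : #(S ∩ B) ≤ ∑ j ∈ S.image Prod.snd, v j := by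
    rw [card_eq_sum_card_fiberwise fun p hp => mem_image_of_mem Prod.snd (mem_inter.1 hp).1]
    exact sum_le_sum fun j _ =>
      (card_le_card (filter_subset_filter _ inter_subset_right)).trans (hB j)
  calc #S = #(S ∩ R ∪ S ∩ B) := by rw [← inter_union_distrib_left, hRB, inter_eq_left.2 hS]
    _ ≤ #(S ∩ R) + #(S ∩ B) := card_union_le _ _
    _ ≤ _ := add_le_add hred hblue

theorem exists_injOn_slots {A : Finset (α × β)}
    (hA : ∀ S ⊆ A, #S ≤ ∑ i ∈ S.image Prod.fst, u i + ∑ j ∈ S.image Prod.snd, v j) :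
    ∃ g : α × β → (Σ _ : α, ℕ) ⊕ (Σ _ : β, ℕ),
      Set.InjOn g A ∧ ∀ p ∈ A, g p ∈ slots u v {p.1} {p.2} := by
  have hall : ∀ s : Finset A, #s ≤ #(s.biUnion fun p => slots u v {p.1.1} {p.1.2}) := by
    intro s
    calc #s = #(s.image Subtype.val) := (card_image_of_injective _ Subtype.val_injective).symm
      _ ≤ _ := hA _ fun _ hp => by obtain ⟨q, -, rfl⟩ := mem_image.1 hp; exact q.2
      _ = _ := by rw [← card_slots, ← biUnion_slots, image_biUnion]
  obtain ⟨f, hf, hft⟩ := (all_card_le_biUnion_card_iff_exists_injective _).1 hall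
  refine ⟨fun p => if hp : p ∈ A then f ⟨p, hp⟩ else Sum.inl ⟨p.1, 0⟩, ?_, ?_⟩
  · intro p hp q hq hpq
    rw [mem_coe] at hp hq
    simp only [dif_pos hp, dif_pos hq] at hpq
    exact congrArg Subtype.val (hf hpq)
  · intro p hp
    simpa [hp] using hft ⟨p, hp⟩

theorem colorable_of_injOn_slots {A : Finset (α × β)} (g : α × β → (Σ _ : α, ℕ) ⊕ (Σ _ : β, ℕ))
    (hinj : Set.InjOn g A) (hg : ∀ p ∈ A, g p ∈ slots u v {p.1} {p.2}) : Colorable u v A := by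
  refine ⟨{p ∈ A | (g p).isLeft}, {p ∈ A | ¬ (g p).isLeft}, filter_union_filter_not_eq _ _,
    disjoint_filter_filter_not _ _ _, fun i => ?_, fun j => ?_⟩
  · calc #{p ∈ {p ∈ A | (g p).isLeft} | p.1 = i} ≤ #(slots u v {i} ∅) := by
          refine card_le_card_of_injOn g (fun p hp => ?_) (hinj.mono fun p hp => ?_) <;>
            simp only [coe_filter, mem_filter] at hp
          · obtain ⟨⟨hpA, hl⟩, rfl⟩ := hp
            exact mem_slots_left_of_isLeft (hg p hpA) hl
          · exact hp.1.1
      _ = u i := by simp [card_slots]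
  · calc #{p ∈ {p ∈ A | ¬ (g p).isLeft} | p.2 = j} ≤ #(slots u v ∅ {j}) := by
          refine card_le_card_of_injOn g (fun p hp => ?_) (hinj.mono fun p hp => ?_) <;>
            simp only [coe_filter, mem_filter] at hp
          · obtain ⟨⟨hpA, hr⟩, rfl⟩ := hp
            exact mem_slots_right_of_not_isLeft (hg p hpA) hr
          · exact hp.1.1
      _ = v j := by simp [card_slots]

end ColorGame

/-- Color game criterion: a subset `A ⊆ [m] × [n]` is colorable with column budgets
`u i` (red) and row budgets `v j` (blue) — i.e. `A` can be partitioned into a red part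
with at most `u i` points in column `i` and a blue part with at most `v j` points in
row `j` — iff every subset `B ⊆ A` satisfies
`|B| ≤ Σ_{i ∈ π₁(B)} u i + Σ_{j ∈ π₂(B)} v j`. -/
theorem colorable_iff (m n : ℕ) (u : Fin m → ℕ) (v : Fin n → ℕ)
    (A : Finset (Fin m × Fin n)) :
    (∃ R B : Finset (Fin m × Fin n), R ∪ B = A ∧ Disjoint R B ∧
        (∀ i : Fin m, (R.filter fun p => p.1 = i).card ≤ u i) ∧
        (∀ j : Fin n, (B.filter fun p => p.2 = j).card ≤ v j)) ↔
      (∀ B ⊆ A, B.card ≤ ∑ i ∈ B.image Prod.fst, u i + ∑ j ∈ B.image Prod.snd, v j) := by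
  refine ⟨ColorGame.Colorable.card_le, fun h => ?_⟩
  obtain ⟨g, hinj, hg⟩ := ColorGame.exists_injOn_slots h
  exact ColorGame.colorable_of_injOn_slots g hinj hg
end
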